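/- For every z ∈ 𝔻 and all vertices x, y of the tree T, the operator norm of c_z(x,y) on ℓ²(X) satisfies ‖c_z(x,y)‖ ≤ 4(1 − |z|)^{−1}. -/

import Mathlib

noncomputable section

open scoped ComplexConjugate

/-- `ℓ²(X)`: the Hilbert space of square-summable complex functions on `X`. -/
abbrev ell2 (X : Type) : Type := lp (fun _ : X => ℂ) 2

/-- The Dirac function `δ_v` at a vertex `v`. -/
noncomputable def delta {X : Type} [DecidableEq X] (v : X) : ell2 X :=
  lp.single 2 v (1 : ℂ)

/-- `w = √(1 − z²)`, using the principal branch of the square root, which is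
holomorphic off the negative real axis and positive on the positive reals. -/
noncomputable def W (z : ℂ) : ℂ := (1 - z ^ 2) ^ ((1 : ℂ) / 2)

/-- The defining property of the edge operator `c_z(x,y)` for adjacent vertices
`x, y`: it sends `δ_x ↦ wδ_x − zδ_y`, `δ_y ↦ wδ_y + zδ_x`, and fixes `δ_v` for
every other vertex `v`. -/
def IsEdgeOp {X : Type} [DecidableEq X] (z : ℂ) (x y : X)
    (A : ell2 X →L[ℂ] ell2 X) : Prop :=
  A (delta x) = W z • delta x - z • delta y ∧
  A (delta y) = W z • delta y + z • delta x ∧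
  ∀ v : X, v ≠ x → v ≠ y → A (delta v) = delta v

/-- The product `f(v₀,v₁) * f(v₁,v₂) * ⋯ * f(v_{n−1},v_n)` along a walk
`v₀, v₁, …, v_n`. -/
def walkProd {X : Type} {T : SimpleGraph X} {E : Type} [Monoid E]
    (f : X → X → E) : {a b : X} → T.Walk a b → E
  | _, _, SimpleGraph.Walk.nil => 1
  | _, _, SimpleGraph.Walk.cons (u := u) (v := v) _ p => f u v * walkProd f p

/-!
Along a geodesic `v₀, …, vₙ` the product `c_z(v₀,v₁) ⋯ c_z(vₙ₋₁,vₙ)` fixes every `δ_u` off the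
path, and an induction on the path shows that it sends `δ_{vₜ}` to
`∑_{i ≤ t} z^{t-i} w^{ε(i,t)} δ_{vᵢ} − z δ_{vₜ₊₁}` with `ε(i,t) ≤ 2`. Grouping by `k = t − i`
writes it as `1 − z S + ∑ₖ zᵏ Dₖ`, where `S` and the `Dₖ` are weighted partial shifts along the
path with weights of modulus at most `1` and `3` (as `|w|² = |1 − z²| ≤ 2`). A partial shift
between orthonormal families has norm at most the supremum of its weights, so the norm is at most
`1 + |z| + 3 ∑ₖ |z|ᵏ ≤ 4 (1 − |z|)⁻¹`.
-/

open Finset InnerProductSpace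

section Orthonormal

variable {𝕜 E F ι : Type*} [RCLike 𝕜] [NormedAddCommGroup E] [InnerProductSpace 𝕜 E]
  [NormedAddCommGroup F] [InnerProductSpace 𝕜 F] [Fintype ι]

theorem Orthonormal.norm_sum_smul_sq {v : ι → E} (hv : Orthonormal 𝕜 v) (a : ι → 𝕜) :
    ‖∑ i, a i • v i‖ ^ 2 = ∑ i, ‖a i‖ ^ 2 := by
  simpa using hv.orthogonalFamily.norm_sum a univ

theorem Orthonormal.norm_sum_smul_rankOne_le {e : ι → E} {f : ι → F} (he : Orthonormal 𝕜 e)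
    (hf : Orthonormal 𝕜 f) {c : ι → 𝕜} {C : ℝ} (hC : 0 ≤ C) (hc : ∀ i, ‖c i‖ ≤ C) :
    ‖∑ i, c i • rankOne 𝕜 (e i) (f i)‖ ≤ C := by
  refine ContinuousLinearMap.opNorm_le_bound _ hC fun x => ?_
  have happly : (∑ i, c i • rankOne 𝕜 (e i) (f i)) x = ∑ i, (c i * inner 𝕜 (f i) x) • e i := by
    simp [smul_smul]
  refine le_of_pow_le_pow_left₀ two_ne_zero (by positivity) ?_
  calc ‖(∑ i, c i • rankOne 𝕜 (e i) (f i)) x‖ ^ 2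
      = ∑ i, ‖c i‖ ^ 2 * ‖inner 𝕜 (f i) x‖ ^ 2 := by
        simp only [happly, he.norm_sum_smul_sq, norm_mul, mul_pow]
    _ ≤ ∑ i, C ^ 2 * ‖inner 𝕜 (f i) x‖ ^ 2 := by
        gcongr with i
        exact hc i
    _ ≤ C ^ 2 * ‖x‖ ^ 2 := by
        rw [← mul_sum]
        gcongr
        exact hf.sum_inner_products_le x
    _ = (C * ‖x‖) ^ 2 := by ring

end Orthonormal

section Delta

variable {X : Type} [DecidableEq X]

theorem delta_apply (v u : X) : delta v u = if u = v then 1 else 0 := by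
  simp [delta, lp.single_apply, Pi.single_apply]

theorem inner_delta_left (v : X) (f : ell2 X) : inner ℂ (delta v) f = f v := by
  simp [delta, lp.inner_single_left]

theorem inner_delta_delta (u v : X) :
    inner ℂ (delta u) (delta v) = if u = v then 1 else 0 := by
  rw [inner_delta_left, delta_apply, eq_comm]

theorem orthonormal_delta : Orthonormal ℂ (delta : X → ell2 X) :=
  orthonormal_iff_ite.mpr inner_delta_delta

theorem continuousLinearMap_ext_delta {A B : ell2 X →L[ℂ] ell2 X}
    (h : ∀ v, A (delta v) = B (delta v)) : A = B :=
  lp.ext_continuousLinearMap (by norm_num) fun v =>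
    ContinuousLinearMap.ext_ring (by simpa [delta] using h v)

theorem eq_one_add_sum_rankOne_of_apply_delta {A : ell2 X →L[ℂ] ell2 X} (S : Finset X)
    (hA : ∀ u ∉ S, A (delta u) = delta u) :
    A = 1 + ∑ x ∈ S, rankOne ℂ (A (delta x) - delta x) (delta x) := by
  refine continuousLinearMap_ext_delta fun u => ?_
  by_cases hu : u ∈ S
  · simp [inner_delta_delta, hu]
  · simp [inner_delta_delta, hu, hA u hu]

theorem norm_sum_smul_rankOne_delta_le {ι : Type*} {s : Finset ι} {a b : ι → X}
    (ha : Set.InjOn a s) (hb : Set.InjOn b s) {c : ι → ℂ} {C : ℝ} (hC : 0 ≤ C)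
    (hc : ∀ i ∈ s, ‖c i‖ ≤ C) :
    ‖∑ i ∈ s, c i • rankOne ℂ (delta (a i)) (delta (b i))‖ ≤ C := by
  rw [← sum_coe_sort]
  exact (orthonormal_delta.comp _ (Set.injOn_iff_injective.mp ha)).norm_sum_smul_rankOne_le
    (orthonormal_delta.comp _ (Set.injOn_iff_injective.mp hb)) hC fun i => hc i i.2

end Delta

theorem norm_W_sq (z : ℂ) : ‖W z‖ ^ 2 = ‖1 - z ^ 2‖ := by
  rw [W, show (1 : ℂ) / 2 = ((1 / 2 : ℝ) : ℂ) by push_cast; ring, Complex.norm_cpow_real,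
    ← Real.rpow_natCast, ← Real.rpow_mul (norm_nonneg _)]
  norm_num

theorem norm_W_sq_le {z : ℂ} (hz : ‖z‖ ≤ 1) : ‖W z‖ ^ 2 ≤ 2 := by
  rw [norm_W_sq]
  calc ‖1 - z ^ 2‖ ≤ 1 + ‖z‖ ^ 2 := (norm_sub_le _ _).trans_eq (by rw [norm_one, norm_pow])
    _ ≤ 2 := by nlinarith [norm_nonneg z]

/-- For `i ≤ t`, the coefficient of `δ_{vᵢ}` in `c_z(v₀,vₙ) δ_{vₜ}` is
`z ^ (t - i) * pathWeight z n i t`: one factor `w` for each of `i`, `t` that is not the endpoint of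
the path on its side. -/
def pathWeight (z : ℂ) (n i t : ℕ) : ℂ :=
  W z ^ ((if i = 0 then 0 else 1) + (if t = n then 0 else 1))

theorem norm_pathWeight_le {z : ℂ} (hz : ‖z‖ ≤ 1) (n i t : ℕ) : ‖pathWeight z n i t‖ ≤ 2 := by
  have hW := norm_W_sq_le hz
  have hW' : ‖W z‖ ≤ 2 := by nlinarith [norm_nonneg (W z)]
  unfold pathWeight
  split_ifs <;> simp [hW, hW']

section Walk

open SimpleGraph Walk

variable {X : Type} [DecidableEq X] {T : SimpleGraph X} {z : ℂ}
  {c : X → X → ell2 X →L[ℂ] ell2 X}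

theorem walkProd_apply_delta_of_notMem_support
    (hc : ∀ u v, T.Adj u v → IsEdgeOp z u v (c u v)) {a b : X} (p : T.Walk a b) {u : X}
    (hu : u ∉ p.support) : walkProd c p (delta u) = delta u := by
  induction p with
  | nil => rfl
  | cons h q ih =>
    rw [support_cons, List.mem_cons, not_or] at hu
    rw [walkProd, mul_apply_eq_comp, ih hu.2]
    exact (hc _ _ h).2.2 u hu.1 fun hv => hu.2 (hv ▸ q.start_mem_support)

theorem SimpleGraph.Walk.IsPath.walkProd_apply_delta_getVert
    (hc : ∀ u v, T.Adj u v → IsEdgeOp z u v (c u v)) {a b : X} {p : T.Walk a b}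
    (hp : p.IsPath) {t : ℕ} (ht : t ≤ p.length) :
    walkProd c p (delta (p.getVert t)) =
      ∑ k ∈ range (t + 1), (z ^ k * pathWeight z p.length (t - k) t) • delta (p.getVert (t - k)) -
        if t < p.length then z • delta (p.getVert (t + 1)) else 0 := by
  induction p generalizing t with
  | nil =>
    obtain rfl : t = 0 := by simpa using ht
    simp [walkProd, pathWeight]
  | @cons u v w h q ih =>
    obtain ⟨hq, hu⟩ := cons_isPath_iff h q |>.mp hp
    obtain ⟨hcu, hcv, hcfix⟩ := hc u v h
    have hfix : ∀ i, 1 ≤ i → i ≤ q.length → c u v (delta (q.getVert i)) = delta (q.getVert i) := by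
      refine fun i hi1 hi => hcfix _ (fun hiu => hu ?_) fun hiv => ?_
      · exact hiu ▸ q.getVert_mem_support i
      · have := hq.getVert_injOn (by simpa using hi) (by simp) (hiv.trans q.getVert_zero.symm)
        omega
    cases t with
    | zero =>
      simp [walkProd, walkProd_apply_delta_of_notMem_support hc q hu, hcu, pathWeight]
    | succ s =>
      rw [length_cons] at ht
      have hlast : c u v (if s < q.length then z • delta (q.getVert (s + 1)) else 0) =
          if s < q.length then z • delta (q.getVert (s + 1)) else 0 := by
        split_ifs with hs
        · rw [map_smul, hfix _ (by omega) hs]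
        · exact map_zero _
      have hmid : ∀ k ∈ range s, c u v ((z ^ k * pathWeight z q.length (s - k) s) •
            delta (q.getVert (s - k))) = (z ^ k * pathWeight z (q.length + 1) (s + 1 - k) (s + 1)) •
            delta ((cons h q).getVert (s + 1 - k)) := by
        intro k hk
        rw [mem_range] at hk
        rw [map_smul, hfix _ (by omega) (by omega), show s + 1 - k = s - k + 1 by omega,
          getVert_cons_succ]
        simp [pathWeight, show s - k ≠ 0 by omega]
      rw [walkProd, mul_apply_eq_comp, getVert_cons_succ, ih hq (by omega), map_sub, hlast,
        map_sum, sum_range_succ, sum_congr rfl hmid, sum_range_succ, sum_range_succ, length_cons]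
      have hw1 : pathWeight z (q.length + 1) 1 (s + 1) = W z * pathWeight z q.length 0 s := by
        simp only [pathWeight, Nat.add_right_cancel_iff, one_ne_zero, ↓reduceIte]
        split_ifs <;> ring
      have hw0 : pathWeight z (q.length + 1) 0 (s + 1) = pathWeight z q.length 0 s := by
        simp [pathWeight]
      simp only [Nat.sub_self, Nat.add_sub_cancel_left, getVert_zero, getVert_cons_succ, map_smul,
        hcv, Nat.add_lt_add_iff_right, hw1, hw0]
      module

-- The `k = 0` correction removes the identity on the path, which is already contained in `1`.
theorem SimpleGraph.Walk.IsPath.walkProd_eq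
    (hc : ∀ u v, T.Adj u v → IsEdgeOp z u v (c u v)) {a b : X} {p : T.Walk a b}
    (hp : p.IsPath) :
    walkProd c p = 1 +
      (∑ k ∈ range (p.length + 1), z ^ k • ∑ i ∈ range (p.length + 1 - k),
        (pathWeight z p.length i (i + k) - if k = 0 then 1 else 0) •
          rankOne ℂ (delta (p.getVert i)) (delta (p.getVert (i + k))) -
      z • ∑ i ∈ range p.length, rankOne ℂ (delta (p.getVert (i + 1))) (delta (p.getVert i))) := by
  have hinj : Set.InjOn p.getVert (range (p.length + 1)) := fun i hi j hj hij =>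
    hp.getVert_injOn (by simpa [Nat.lt_succ_iff] using hi) (by simpa [Nat.lt_succ_iff] using hj) hij
  have hfix : ∀ u ∉ (range (p.length + 1)).image p.getVert, walkProd c p (delta u) = delta u := by
    refine fun u hu => walkProd_apply_delta_of_notMem_support hc p fun hs => hu ?_
    obtain ⟨i, rfl, hi⟩ := mem_support_iff_exists_getVert.mp hs
    exact mem_image_of_mem _ (mem_range.mpr (by omega))
  have hcol : ∀ t ∈ range (p.length + 1), walkProd c p (delta (p.getVert t)) - delta (p.getVert t) =
      ∑ k ∈ range (t + 1), (z ^ k * (pathWeight z p.length (t - k) t - if k = 0 then 1 else 0)) •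
        delta (p.getVert (t - k)) - if t < p.length then z • delta (p.getVert (t + 1)) else 0 := by
    intro t ht
    rw [hp.walkProd_apply_delta_getVert hc (by simpa [Nat.lt_succ_iff] using ht), sub_right_comm]
    congr 1
    simp [mul_sub, sub_smul, sum_sub_distrib]
  rw [eq_one_add_sum_rankOne_of_apply_delta _ hfix, sum_image hinj,
    sum_congr rfl fun t ht => by rw [hcol t ht]]
  simp only [map_sub, map_sum, map_smul, sub_apply, FunLike.coe_sum, Finset.sum_apply, smul_apply]
  rw [sum_sub_distrib]
  congr 2
  · simp_rw [smul_sum, smul_smul]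
    rw [← sum_range_diag_flip]
    refine sum_congr rfl fun t ht => sum_congr rfl fun k hk => ?_
    rw [Nat.sub_add_cancel (by simpa [Nat.lt_succ_iff] using hk)]
  · rw [sum_range_succ, if_neg (lt_irrefl p.length), map_zero, zero_apply, add_zero, smul_sum]
    refine sum_congr rfl fun t ht => ?_
    rw [if_pos (mem_range.mp ht), map_smul, smul_apply]

theorem SimpleGraph.Walk.IsPath.norm_walkProd_le (hz : ‖z‖ < 1)
    (hc : ∀ u v, T.Adj u v → IsEdgeOp z u v (c u v)) {a b : X} {p : T.Walk a b}
    (hp : p.IsPath) : ‖walkProd c p‖ ≤ 4 * (1 - ‖z‖)⁻¹ := by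
  have hinj : ∀ {k m : ℕ}, m + k ≤ p.length + 1 →
      Set.InjOn (fun i => p.getVert (i + k)) (range m) := by
    intro k m hm i hi j hj hij
    have := hp.getVert_injOn (by simp at hi ⊢; omega) (by simp at hj ⊢; omega) hij
    omega
  have hdiag : ∀ k ∈ range (p.length + 1), ‖∑ i ∈ range (p.length + 1 - k),
      (pathWeight z p.length i (i + k) - if k = 0 then 1 else 0) •
        rankOne ℂ (delta (p.getVert i)) (delta (p.getVert (i + k)))‖ ≤ 3 := by
    intro k hk
    refine norm_sum_smul_rankOne_delta_le (hinj (k := 0) (by omega))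
      (hinj (by simp at hk; omega)) (by norm_num) fun i _ => (norm_sub_le _ _).trans ?_
    have := norm_pathWeight_le hz.le p.length i (i + k)
    split_ifs <;> norm_num <;> linarith
  have hshift : ‖∑ i ∈ range p.length,
      rankOne ℂ (delta (p.getVert (i + 1))) (delta (p.getVert i))‖ ≤ 1 := by
    simpa using norm_sum_smul_rankOne_delta_le (c := fun _ => (1 : ℂ)) (hinj (k := 1) le_rfl)
      (hinj (k := 0) (by omega)) zero_le_one (by simp)
  have hgeom : ∑ k ∈ range (p.length + 1), ‖z‖ ^ k ≤ (1 - ‖z‖)⁻¹ := by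
    have := geom_sum_Ico_le_of_lt_one (m := 0) (n := p.length + 1) (norm_nonneg z) hz
    rwa [← range_eq_Ico, pow_zero, one_div] at this
  rw [hp.walkProd_eq hc]
  calc _ ≤ 1 + (∑ k ∈ range (p.length + 1), ‖z‖ ^ k * 3 + ‖z‖ * 1) := by
        refine (norm_add_le _ _).trans (add_le_add ContinuousLinearMap.norm_id_le ?_)
        refine (norm_sub_le _ _).trans (add_le_add ((norm_sum_le _ _).trans ?_) ?_)
        · refine sum_le_sum fun k hk => ?_
          rw [norm_smul, norm_pow]
          exact mul_le_mul_of_nonneg_left (hdiag k hk) (by positivity)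
        · rw [norm_smul]
          exact mul_le_mul_of_nonneg_left hshift (norm_nonneg z)
    _ ≤ 1 + ‖z‖ + 3 * (1 - ‖z‖)⁻¹ := by
        rw [← sum_mul]
        linarith
    _ ≤ 4 * (1 - ‖z‖)⁻¹ := by
        have hpos : 0 < 1 - ‖z‖ := by linarith
        rw [← div_eq_mul_inv, ← div_eq_mul_inv, le_div_iff₀ hpos, add_mul,
          div_mul_cancel₀ _ hpos.ne']
        nlinarith [norm_nonneg z]

end Walk

theorem cocycle_norm_bound_general {X : Type} [DecidableEq X] (T : SimpleGraph X)
    (hconn : T.Connected)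
    (c : ℂ → X → X → (ell2 X →L[ℂ] ell2 X))
    (hedge : ∀ z ∈ Metric.ball (0 : ℂ) 1, ∀ u v : X, T.Adj u v →
      IsEdgeOp z u v (c z u v))
    (hgeo : ∀ z ∈ Metric.ball (0 : ℂ) 1, ∀ u v : X, ∀ p : T.Walk u v,
      p.length = T.dist u v → c z u v = walkProd (c z) p) :
    ∀ z ∈ Metric.ball (0 : ℂ) 1, ∀ x y : X,
      ‖c z x y‖ ≤ 4 * (1 - ‖z‖)⁻¹ := by
  intro z hz x y
  obtain ⟨p, hp⟩ := hconn.exists_walk_length_eq_dist x y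
  rw [hgeo z hz x y p hp]
  exact (p.isPath_of_length_eq_dist hp).norm_walkProd_le (mem_ball_zero_iff.mp hz) (hedge z hz)

/-- For every `z ∈ 𝔻` and all vertices `x, y` of the tree `T`, the
operator norm of `c_z(x,y)` on `ℓ²(X)` satisfies `‖c_z(x,y)‖ ≤ 4(1 − |z|)⁻¹`. -/
theorem cocycle_norm_bound {X : Type} [DecidableEq X] (T : SimpleGraph X)
    (hconn : T.Connected) (hacyc : T.IsAcyclic)
    (c : ℂ → X → X → (ell2 X →L[ℂ] ell2 X))
    (hedge : ∀ z ∈ Metric.ball (0 : ℂ) 1, ∀ u v : X, T.Adj u v →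
      IsEdgeOp z u v (c z u v))
    (hgeo : ∀ z ∈ Metric.ball (0 : ℂ) 1, ∀ u v : X, ∀ p : T.Walk u v,
      p.length = T.dist u v → c z u v = walkProd (c z) p) :
    ∀ z ∈ Metric.ball (0 : ℂ) 1, ∀ x y : X,
      ‖c z x y‖ ≤ 4 * (1 - ‖z‖)⁻¹ :=
  cocycle_norm_bound_general T hconn c hedge hgeo
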